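/- Under the hypotheses of the optimality theorem for the relaxation (R) — namely, U* ⊆ {1,…,M} with |U*| = m ≥ 1 and V* ⊆ {1,…,N} with |V*| = n ≥ 1 with characteristic vectors ū, v̄, X* = ū v̄ᵀ feasible for (R), and there exist W ∈ R^{M×N}, λ ∈ R^{M×N}, μ with W v̄ = 0, ūᵀ W = 0, and ū v̄ᵀ/√(mn) + W = μ e eᵀ + Σ_{(i,j)∈Ẽ} λ_{ij} e_i e_jᵀ — if in addition ‖W‖ < 1 and μ > 0, then X* is the unique optimal solution of (R): every feasible X ≠ X* satisfies ‖X‖_* > ‖X*‖_*. -/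

import Mathlib

open Matrix

/-- The spectral norm (largest singular value) of a real matrix. -/
noncomputable def matSpectralNorm {m n : Type*} [Fintype m] [Fintype n] [DecidableEq n]
    (A : Matrix m n ℝ) : ℝ :=
  ‖LinearMap.toContinuousLinearMap (Matrix.toEuclideanLin A)‖

/-- The nuclear norm (sum of singular values) of a real matrix. -/
noncomputable def nuclearNorm {m n : Type*} [Fintype m] [Fintype n] [DecidableEq n]
    (A : Matrix m n ℝ) : ℝ :=
  ∑ j, Real.sqrt ((show (Aᵀ * A).IsHermitian by simpa using Matrix.isHermitian_conjTranspose_mul_self A).eigenvalues j)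

/-- The characteristic vector of a finite set of indices. -/
def charVec {ι : Type*} [DecidableEq ι] (S : Finset ι) : ι → ℝ :=
  fun i => if i ∈ S then 1 else 0

/-- Feasibility for the relaxation (R): `∑_{i,j} X_{ij} ≥ mn` and `X_{ij} = 0` for all
`(i,j)` in the complement of `E`. -/
def FeasR {M N : ℕ} (E : Set (Fin M × Fin N)) (m n : ℕ)
    (X : Matrix (Fin M) (Fin N) ℝ) : Prop :=
  (m : ℝ) * n ≤ (∑ i, ∑ j, X i j) ∧ ∀ i j, (i, j) ∉ E → X i j = 0

/-!
The matrix `D = ū v̄ᵀ / √(mn) + W` has spectral norm at most one, so `∑ D_ij X_ij ≤ ‖X‖_*` for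
every `X`. The dual equation rewrites `D` as `μ eeᵀ + Λ`, and since `Λ` vanishes on `E` while a
feasible `X` vanishes off `E`, the left side is `μ ∑ X_ij ≥ μ mn = √(mn) = ‖X*‖_*`.
If `‖X‖_* ≤ ‖X*‖_*`, all these inequalities are equalities: for every right singular vector `b`
of `X` with `X b ≠ 0` we get `‖D b‖ = 1`, which, as `‖W‖ < 1` and `W` annihilates `v̄` and `ūᵀ`,
forces `b ∥ v̄` and `X b ∥ ū`. Hence `X` is a multiple of `ū v̄ᵀ`, and `∑ X_ij = mn` makes it `X*`.
-/

open scoped InnerProductSpace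
open WithLp (toLp ofLp)

section DualCertificate

variable {E F : Type*} [NormedAddCommGroup E] [InnerProductSpace ℝ E]
  [NormedAddCommGroup F] [InnerProductSpace ℝ F]

/-- The action of the dual certificate `u vᵀ / (‖u‖ ‖v‖) + W`. -/
noncomputable def dualCertificate (u : F) (v : E) (W : E →L[ℝ] F) (x : E) : F :=
  (⟪v, x⟫_ℝ / (‖u‖ * ‖v‖)) • u + W x

variable {u : F} {v : E} {W : E →L[ℝ] F}

/- Pythagoras twice: `x - (⟪v, x⟫ / ‖v‖²) v` is orthogonal to `v`, and `u` to the range of `W`. -/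
theorem norm_dualCertificate_sq_add_le (hv : v ≠ 0) (hWv : W v = 0)
    (hWu : ∀ y, ⟪u, W y⟫_ℝ = 0) (x : E) :
    ‖dualCertificate u v W x‖ ^ 2 + (1 - ‖W‖ ^ 2) * ‖x - (⟪v, x⟫_ℝ / ‖v‖ ^ 2) • v‖ ^ 2
      ≤ ‖x‖ ^ 2 := by
  set c := ⟪v, x⟫_ℝ
  set w := x - (c / ‖v‖ ^ 2) • v with hw
  have hv' : ‖v‖ ≠ 0 := norm_ne_zero_iff.2 hv
  have hvw : ⟪v, w⟫_ℝ = 0 := by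
    rw [hw, inner_sub_right, real_inner_smul_right, real_inner_self_eq_norm_sq]
    field_simp
    ring
  have hWx : W x = W w := by simp [hw, hWv]
  have hx : ‖x‖ ^ 2 = c ^ 2 / ‖v‖ ^ 2 + ‖w‖ ^ 2 := by
    have h := norm_add_sq_eq_norm_sq_add_norm_sq_real
      (x := (c / ‖v‖ ^ 2) • v) (y := w) (by rw [real_inner_smul_left, hvw, mul_zero])
    rw [show (c / ‖v‖ ^ 2) • v + w = x by rw [hw]; abel, norm_smul, Real.norm_eq_abs] at h
    rw [sq, sq, h, ← sq, ← sq, mul_pow, sq_abs]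
    field_simp
  have hTx : ‖dualCertificate u v W x‖ ^ 2 ≤ c ^ 2 / ‖v‖ ^ 2 + ‖W w‖ ^ 2 := by
    have h := norm_add_sq_eq_norm_sq_add_norm_sq_real
      (x := (c / (‖u‖ * ‖v‖)) • u) (y := W w) (by rw [real_inner_smul_left, hWu, mul_zero])
    rw [dualCertificate, hWx, sq, h, ← sq, ← sq, norm_smul, Real.norm_eq_abs, mul_pow, sq_abs]
    gcongr
    rcases eq_or_ne ‖u‖ 0 with hu | hu
    · simp only [hu, zero_mul, div_zero, zero_pow two_ne_zero, mul_zero]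
      positivity
    · field_simp
      exact le_rfl
  have hWw : ‖W w‖ ^ 2 ≤ ‖W‖ ^ 2 * ‖w‖ ^ 2 := by
    rw [← mul_pow]
    gcongr
    exact W.le_opNorm w
  linarith

theorem norm_dualCertificate_le (hv : v ≠ 0) (hWv : W v = 0) (hWu : ∀ y, ⟪u, W y⟫_ℝ = 0)
    (hW : ‖W‖ ≤ 1) (x : E) : ‖dualCertificate u v W x‖ ≤ ‖x‖ := by
  have h := norm_dualCertificate_sq_add_le hv hWv hWu x
  have : 0 ≤ (1 - ‖W‖ ^ 2) * ‖x - (⟪v, x⟫_ℝ / ‖v‖ ^ 2) • v‖ ^ 2 := by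
    have : ‖W‖ ^ 2 ≤ 1 := by nlinarith [norm_nonneg W]
    positivity
  exact (pow_le_pow_iff_left₀ (norm_nonneg _) (norm_nonneg _) two_ne_zero).1 (by linarith)

theorem inner_dualCertificate_le (hv : v ≠ 0) (hWv : W v = 0) (hWu : ∀ y, ⟪u, W y⟫_ℝ = 0)
    (hW : ‖W‖ ≤ 1) (x : E) (y : F) : ⟪dualCertificate u v W x, y⟫_ℝ ≤ ‖x‖ * ‖y‖ :=
  (real_inner_le_norm _ _).trans <| by gcongr; exact norm_dualCertificate_le hv hWv hWu hW x

theorem eq_smul_of_norm_le_norm_dualCertificate (hv : v ≠ 0) (hWv : W v = 0)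
    (hWu : ∀ y, ⟪u, W y⟫_ℝ = 0) (hW : ‖W‖ < 1) {x : E}
    (hx : ‖x‖ ≤ ‖dualCertificate u v W x‖) : x = (⟪v, x⟫_ℝ / ‖v‖ ^ 2) • v := by
  have h := norm_dualCertificate_sq_add_le hv hWv hWu x
  have hW2 : 0 < 1 - ‖W‖ ^ 2 := by nlinarith [norm_nonneg W]
  have hx2 : ‖x‖ ^ 2 ≤ ‖dualCertificate u v W x‖ ^ 2 := by gcongr
  have : ‖x - (⟪v, x⟫_ℝ / ‖v‖ ^ 2) • v‖ ^ 2 ≤ 0 := by nlinarith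
  rw [← sub_eq_zero, ← norm_eq_zero]
  exact pow_eq_zero_iff two_ne_zero |>.1 (le_antisymm this (sq_nonneg _))

theorem exists_smul_of_norm_le_inner_dualCertificate (hv : v ≠ 0) (hWv : W v = 0)
    (hWu : ∀ y, ⟪u, W y⟫_ℝ = 0) (hW : ‖W‖ < 1) {b : E} (hb : ‖b‖ = 1) {y : F}
    (hy : ‖y‖ ≤ ⟪dualCertificate u v W b, y⟫_ℝ) :
    ∃ κ : ℝ, ∀ z, ⟪b, z⟫_ℝ • y = (κ * ⟪v, z⟫_ℝ) • u := by
  rcases eq_or_ne y 0 with rfl | hy0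
  · exact ⟨0, fun z => by simp⟩
  set a := ⟪v, b⟫_ℝ / ‖v‖ ^ 2
  have hTb : ‖dualCertificate u v W b‖ = 1 := by
    have hCS := real_inner_le_norm (dualCertificate u v W b) y
    have := norm_pos_iff.2 hy0
    exact le_antisymm (hb ▸ norm_dualCertificate_le hv hWv hWu hW.le b) (by nlinarith)
  have hba : b = a • v := eq_smul_of_norm_le_norm_dualCertificate hv hWv hWu hW (by rw [hb, hTb])
  have hyT : y = ‖y‖ • dualCertificate u v W b := by
    have := inner_eq_norm_mul_iff_real.1 <| le_antisymm
      (real_inner_le_norm (dualCertificate u v W b) y) (by rw [hTb, one_mul]; exact hy)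
    rw [this, hTb, one_smul]
  have hT : dualCertificate u v W b = (⟪v, b⟫_ℝ / (‖u‖ * ‖v‖)) • u := by
    rw [dualCertificate, show W b = 0 by rw [hba, map_smul, hWv, smul_zero], add_zero]
  refine ⟨a * ‖y‖ * (⟪v, b⟫_ℝ / (‖u‖ * ‖v‖)), fun z => ?_⟩
  have hz : ⟪b, z⟫_ℝ = a * ⟪v, z⟫_ℝ := by rw [hba, real_inner_smul_left]
  rw [hz]
  nth_rewrite 1 [hyT]
  rw [hT, smul_smul, smul_smul]
  ring_nf

end DualCertificate

theorem Real.sum_sqrt_eq_sqrt_sum_of_card_ne_zero_le_one {ι : Type*} [Fintype ι] {f : ι → ℝ}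
    (hf : Fintype.card {i // f i ≠ 0} ≤ 1) : ∑ i, √(f i) = √(∑ i, f i) := by
  by_cases h : ∃ i, f i ≠ 0
  · obtain ⟨i, hi⟩ := h
    have hzero : ∀ j, j ≠ i → f j = 0 := fun j hji => by
      by_contra hj
      exact hji (congrArg Subtype.val (Fintype.card_le_one_iff.1 hf ⟨j, hj⟩ ⟨i, hi⟩))
    rw [Finset.sum_eq_single i (fun j _ hj => by rw [hzero j hj, Real.sqrt_zero]) (by simp),
      Finset.sum_eq_single i (fun j _ hj => hzero j hj) (by simp)]
  · simp_all

theorem norm_toLp_charVec {ι : Type*} [Fintype ι] [DecidableEq ι] (S : Finset ι) :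
    ‖toLp 2 (charVec S)‖ = √S.card := by
  rw [EuclideanSpace.norm_eq]
  congr 1
  simp [charVec, apply_ite]

theorem sum_charVec {ι : Type*} [Fintype ι] [DecidableEq ι] (S : Finset ι) :
    ∑ i, charVec S i = S.card := by
  simp [charVec]

theorem sum_mul_eq_of_support {m n : Type*} [Fintype m] [Fintype n] {E : Set (m × n)}
    {Λ Y : Matrix m n ℝ} (μ : ℝ) (hΛ : ∀ i j, (i, j) ∈ E → Λ i j = 0)
    (hY : ∀ i j, (i, j) ∉ E → Y i j = 0) :
    ∑ i, ∑ j, (μ • Matrix.of (fun _ _ => (1 : ℝ)) + Λ : Matrix m n ℝ) i j * Y i j =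
      μ * ∑ i, ∑ j, Y i j := by
  rw [Finset.mul_sum]
  refine Finset.sum_congr rfl fun i _ => ?_
  rw [Finset.mul_sum]
  refine Finset.sum_congr rfl fun j _ => ?_
  by_cases hE : (i, j) ∈ E
  · simp [hΛ i j hE]
  · simp [hY i j hE]

theorem Matrix.isHermitian_transpose_mul_self {m n : Type*} [Fintype m] (A : Matrix m n ℝ) :
    (Aᵀ * A).IsHermitian := by
  simpa using Matrix.isHermitian_conjTranspose_mul_self A

section Matrix

variable {m n : Type*} [Fintype n] [DecidableEq n] {u : EuclideanSpace ℝ m}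
  {v : EuclideanSpace ℝ n} {W : Matrix m n ℝ}

theorem toEuclideanLin_apply_eq_inner (A : Matrix m n ℝ) (x : EuclideanSpace ℝ n) (i : m) :
    toEuclideanLin A x i = ⟪toLp 2 (A i), x⟫_ℝ := by
  simp [toLpLin_apply, mulVec, dotProduct, PiLp.inner_apply, mul_comm]

theorem toEuclideanLin_vecMulVec (x : EuclideanSpace ℝ n) :
    toEuclideanLin (vecMulVec ⇑u ⇑v) x = ⟪v, x⟫_ℝ • u := by
  ext i
  simp [toLpLin_apply, vecMulVec_mulVec, PiLp.inner_apply, dotProduct, mul_comm]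

theorem eq_smul_vecMulVec_of_toEuclideanLin_eq {X : Matrix m n ℝ} {κ : ℝ}
    (hX : ∀ z, toEuclideanLin X z = (κ * ⟪v, z⟫_ℝ) • u) : X = κ • vecMulVec ⇑u ⇑v := by
  ext i k
  have := congrArg (· i) (hX (EuclideanSpace.single k 1))
  simp only [toLpLin_apply, PiLp.ofLp_single, mulVec_single, MulOpposite.op_one, one_smul,
    col_apply, EuclideanSpace.inner_single_right, Real.ringHom_apply, one_mul, PiLp.smul_apply,
    smul_eq_mul] at this
  rw [this, Matrix.smul_apply, vecMulVec_apply, smul_eq_mul]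
  ring

theorem toEuclideanLin_apply_eq_zero_of_mulVec_eq_zero (hWv : W *ᵥ ⇑v = 0) :
    toEuclideanLin W v = 0 := by
  rw [toLpLin_apply, hWv, WithLp.toLp_zero]

variable [Fintype m]

theorem sum_inner_toEuclideanLin (b : OrthonormalBasis n ℝ (EuclideanSpace ℝ n))
    (D X : Matrix m n ℝ) :
    ∑ j, ⟪toEuclideanLin D (b j), toEuclideanLin X (b j)⟫_ℝ = ∑ i, ∑ k, D i k * X i k := by
  simp_rw [PiLp.inner_apply, toEuclideanLin_apply_eq_inner, RCLike.inner_apply, conj_trivial]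
  rw [Finset.sum_comm]
  refine Finset.sum_congr rfl fun i _ => ?_
  simp_rw [real_inner_comm _ (toLp 2 (D i)), b.sum_inner_mul_inner]
  simp [PiLp.inner_apply]

theorem eigenvalues_transpose_mul_self_eq_norm_sq (X : Matrix m n ℝ) (j : n) :
    X.isHermitian_transpose_mul_self.eigenvalues j =
      ‖toEuclideanLin X (X.isHermitian_transpose_mul_self.eigenvectorBasis j)‖ ^ 2 := by
  set b := X.isHermitian_transpose_mul_self.eigenvectorBasis j
  have hb : ofLp b ⬝ᵥ ofLp b = 1 := by
    have := X.isHermitian_transpose_mul_self.eigenvectorBasis.inner_eq_one j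
    rwa [EuclideanSpace.inner_eq_star_dotProduct, star_trivial] at this
  rw [← real_inner_self_eq_norm_sq, toLpLin_apply, EuclideanSpace.inner_toLp_toLp, star_trivial,
    dotProduct_mulVec, ← mulVec_transpose, mulVec_mulVec,
    X.isHermitian_transpose_mul_self.mulVec_eigenvectorBasis j, smul_dotProduct, hb,
    smul_eq_mul, mul_one]

theorem nuclearNorm_eq_sum_norm (X : Matrix m n ℝ) :
    nuclearNorm X =
      ∑ j, ‖toEuclideanLin X (X.isHermitian_transpose_mul_self.eigenvectorBasis j)‖ :=
  Finset.sum_congr rfl fun j _ => by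
    rw [eigenvalues_transpose_mul_self_eq_norm_sq, Real.sqrt_sq (norm_nonneg _)]

/- `Aᵀ A` has rank at most one, so at most one eigenvalue is nonzero; their sum is `tr (Aᵀ A)`. -/
theorem nuclearNorm_vecMulVec : nuclearNorm (vecMulVec ⇑u ⇑v) = ‖u‖ * ‖v‖ := by
  set A := vecMulVec ⇑u ⇑v
  have hA := A.isHermitian_transpose_mul_self
  have hrank : Fintype.card {j // hA.eigenvalues j ≠ 0} ≤ 1 := by
    rw [← hA.rank_eq_card_non_zero_eigs, rank_transpose_mul_self]
    exact rank_vecMulVec_le _ _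
  have htrace : ∑ j, hA.eigenvalues j = (‖u‖ * ‖v‖) ^ 2 := by
    have := hA.trace_eq_sum_eigenvalues
    simp only [RCLike.ofReal_real_eq_id, id] at this
    rw [← this, mul_pow, EuclideanSpace.real_norm_sq_eq, EuclideanSpace.real_norm_sq_eq,
      Finset.sum_mul_sum, Finset.sum_comm]
    simp only [A, trace, diag_apply, mul_apply, transpose_apply, vecMulVec_apply]
    exact Finset.sum_congr rfl fun _ _ => Finset.sum_congr rfl fun _ _ => by ring
  rw [nuclearNorm, Real.sum_sqrt_eq_sqrt_sum_of_card_ne_zero_le_one hrank, htrace,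
    Real.sqrt_sq (by positivity)]

theorem toEuclideanLin_smul_vecMulVec_add (x : EuclideanSpace ℝ n) :
    toEuclideanLin ((‖u‖ * ‖v‖)⁻¹ • vecMulVec ⇑u ⇑v + W) x =
      dualCertificate u v (toEuclideanLin W).toContinuousLinearMap x := by
  rw [map_add, map_smul, LinearMap.add_apply, LinearMap.smul_apply, toEuclideanLin_vecMulVec,
    smul_smul, dualCertificate, LinearMap.coe_toContinuousLinearMap', div_eq_inv_mul]

theorem inner_toEuclideanLin_eq_zero_of_vecMul_eq_zero (hWu : ⇑u ᵥ* W = 0)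
    (y : EuclideanSpace ℝ n) : ⟪u, toEuclideanLin W y⟫_ℝ = 0 := by
  rw [toLpLin_apply, EuclideanSpace.inner_eq_star_dotProduct, star_trivial, dotProduct_comm,
    dotProduct_mulVec, hWu, zero_dotProduct]

theorem sum_mul_vecMulVec_self (hWv : W *ᵥ ⇑v = 0) :
    ∑ i, ∑ k, ((‖u‖ * ‖v‖)⁻¹ • vecMulVec ⇑u ⇑v + W) i k * vecMulVec ⇑u ⇑v i k =
      ‖u‖ * ‖v‖ := by
  calc _ = ⟪u, toEuclideanLin ((‖u‖ * ‖v‖)⁻¹ • vecMulVec ⇑u ⇑v + W) v⟫_ℝ := by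
        simp only [toLpLin_apply, PiLp.inner_apply, mulVec, dotProduct, vecMulVec_apply,
          RCLike.inner_apply, conj_trivial, Finset.sum_mul]
        exact Finset.sum_congr rfl fun _ _ => Finset.sum_congr rfl fun _ _ => by ring
    _ = ‖v‖ ^ 2 / (‖u‖ * ‖v‖) * ‖u‖ ^ 2 := by
        rw [toEuclideanLin_smul_vecMulVec_add, dualCertificate,
          LinearMap.coe_toContinuousLinearMap', toEuclideanLin_apply_eq_zero_of_mulVec_eq_zero hWv,
          add_zero, real_inner_smul_right, real_inner_self_eq_norm_sq, real_inner_self_eq_norm_sq]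
    _ = ‖u‖ * ‖v‖ := by
        rcases eq_or_ne (‖u‖ * ‖v‖) 0 with h | h
        · simp [h]
        · field_simp

theorem sum_mul_le_nuclearNorm (hv : v ≠ 0) (hWv : W *ᵥ ⇑v = 0) (hWu : ⇑u ᵥ* W = 0)
    (hW : matSpectralNorm W ≤ 1) (X : Matrix m n ℝ) :
    ∑ i, ∑ k, ((‖u‖ * ‖v‖)⁻¹ • vecMulVec ⇑u ⇑v + W) i k * X i k ≤ nuclearNorm X := by
  set b := X.isHermitian_transpose_mul_self.eigenvectorBasis
  rw [← sum_inner_toEuclideanLin b, nuclearNorm_eq_sum_norm]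
  gcongr with j
  rw [toEuclideanLin_smul_vecMulVec_add, ← one_mul ‖_‖, ← b.norm_eq_one j]
  exact inner_dualCertificate_le hv (toEuclideanLin_apply_eq_zero_of_mulVec_eq_zero hWv)
    (inner_toEuclideanLin_eq_zero_of_vecMul_eq_zero hWu) hW _ _

theorem exists_eq_smul_vecMulVec_of_nuclearNorm_le (hv : v ≠ 0) (hWv : W *ᵥ ⇑v = 0)
    (hWu : ⇑u ᵥ* W = 0) (hW : matSpectralNorm W < 1) {X : Matrix m n ℝ}
    (hX : nuclearNorm X ≤ ∑ i, ∑ k, ((‖u‖ * ‖v‖)⁻¹ • vecMulVec ⇑u ⇑v + W) i k * X i k) :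
    ∃ κ : ℝ, X = κ • vecMulVec ⇑u ⇑v := by
  set b := X.isHermitian_transpose_mul_self.eigenvectorBasis
  set T := dualCertificate u v (toEuclideanLin W).toContinuousLinearMap
  have hWv' := toEuclideanLin_apply_eq_zero_of_mulVec_eq_zero hWv
  have hWu' := inner_toEuclideanLin_eq_zero_of_vecMul_eq_zero hWu
  have hgap : ∀ j, 0 ≤ ‖toEuclideanLin X (b j)‖ - ⟪T (b j), toEuclideanLin X (b j)⟫_ℝ := by
    intro j
    have := inner_dualCertificate_le hv hWv' hWu' hW.le (b j) (toEuclideanLin X (b j))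
    rw [b.norm_eq_one, one_mul] at this
    linarith
  have hsum : ∑ j, (‖toEuclideanLin X (b j)‖ - ⟪T (b j), toEuclideanLin X (b j)⟫_ℝ) = 0 := by
    simp_rw [T, ← toEuclideanLin_smul_vecMulVec_add]
    rw [Finset.sum_sub_distrib, ← nuclearNorm_eq_sum_norm, sum_inner_toEuclideanLin]
    linarith [sum_mul_le_nuclearNorm hv hWv hWu hW.le X]
  have htight : ∀ j, ‖toEuclideanLin X (b j)‖ ≤ ⟪T (b j), toEuclideanLin X (b j)⟫_ℝ := fun j =>
    sub_nonpos.1 ((Finset.sum_eq_zero_iff_of_nonneg fun j _ => hgap j).1 hsum j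
      (Finset.mem_univ j)).le
  choose κ hκ using fun j =>
    exists_smul_of_norm_le_inner_dualCertificate hv hWv' hWu' hW (b.norm_eq_one j) (htight j)
  refine ⟨∑ j, κ j, eq_smul_vecMulVec_of_toEuclideanLin_eq fun z => ?_⟩
  calc toEuclideanLin X z = toEuclideanLin X (∑ j, ⟪b j, z⟫_ℝ • b j) := by rw [b.sum_repr']
    _ = ∑ j, (κ j * ⟪v, z⟫_ℝ) • u := by simp only [map_sum, map_smul, hκ]
    _ = ((∑ j, κ j) * ⟪v, z⟫_ℝ) • u := by rw [← Finset.sum_smul, Finset.sum_mul]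

end Matrix

/-- under the hypotheses of the optimality theorem for the relaxation (R),
if moreover `‖W‖ < 1` and `μ > 0`, then `X* = ū v̄ᵀ` is the unique optimal solution of (R):
every feasible `X ≠ X*` satisfies `‖X‖_* > ‖X*‖_*`. -/
theorem relaxation_uniqueness
    (M N m n : ℕ) (hm : 1 ≤ m) (hn : 1 ≤ n)
    (E : Set (Fin M × Fin N))
    (Ustar : Finset (Fin M)) (Vstar : Finset (Fin N))
    (hUm : Ustar.card = m) (hVn : Vstar.card = n)
    (hfeas : FeasR E m n (vecMulVec (charVec Ustar) (charVec Vstar)))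
    (W Λ : Matrix (Fin M) (Fin N) ℝ) (μ : ℝ)
    (hWv : W *ᵥ charVec Vstar = 0)
    (hWu : charVec Ustar ᵥ* W = 0)
    (hΛ : ∀ i j, (i, j) ∈ E → Λ i j = 0)
    (heq : (Real.sqrt ((m : ℝ) * n))⁻¹ • vecMulVec (charVec Ustar) (charVec Vstar) + W
         = μ • Matrix.of (fun _ _ => (1 : ℝ)) + Λ)
    (hWlt : matSpectralNorm W < 1) (hμpos : 0 < μ) :
    ∀ X : Matrix (Fin M) (Fin N) ℝ, FeasR E m n X →
      X ≠ vecMulVec (charVec Ustar) (charVec Vstar) →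
      nuclearNorm X > nuclearNorm (vecMulVec (charVec Ustar) (charVec Vstar)) := by
  intro X hX hne
  set u := toLp 2 (charVec Ustar)
  set v := toLp 2 (charVec Vstar)
  have hs : ‖u‖ * ‖v‖ = √((m : ℝ) * n) := by
    rw [norm_toLp_charVec, norm_toLp_charVec, hUm, hVn, Real.sqrt_mul (Nat.cast_nonneg m)]
  have hv : v ≠ 0 := by
    rw [← norm_pos_iff, norm_toLp_charVec, hVn, Real.sqrt_pos, Nat.cast_pos]
    omega
  have hpair : ∀ Y : Matrix (Fin M) (Fin N) ℝ, FeasR E m n Y →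
      ∑ i, ∑ k, ((‖u‖ * ‖v‖)⁻¹ • vecMulVec ⇑u ⇑v + W) i k * Y i k = μ * ∑ i, ∑ k, Y i k :=
    fun Y hY => by rw [hs]; exact heq ▸ sum_mul_eq_of_support μ hΛ hY.2
  have hstar : ∑ i, ∑ k, vecMulVec ⇑u ⇑v i k = m * n := by
    simp only [vecMulVec_apply, ← Finset.sum_mul_sum, u, v, sum_charVec, hUm, hVn]
  have hμ : μ * (m * n) = ‖u‖ * ‖v‖ := by
    rw [← sum_mul_vecMulVec_self hWv, hpair _ hfeas, ← hstar]
  have hlow : ‖u‖ * ‖v‖ ≤ μ * ∑ i, ∑ k, X i k := hμ ▸ mul_le_mul_of_nonneg_left hX.1 hμpos.le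
  have hdual := hpair X hX ▸ sum_mul_le_nuclearNorm hv hWv hWu hWlt.le X
  by_contra hle
  rw [not_lt, show vecMulVec (charVec Ustar) (charVec Vstar) = vecMulVec ⇑u ⇑v from rfl,
    nuclearNorm_vecMulVec] at hle
  obtain ⟨κ, rfl⟩ := exists_eq_smul_vecMulVec_of_nuclearNorm_le hv hWv hWu hWlt
    (by rw [hpair _ hX]; linarith)
  have hsum : ∑ i, ∑ k, (κ • vecMulVec ⇑u ⇑v) i k = κ * (m * n) := by
    simp only [Matrix.smul_apply, smul_eq_mul, ← Finset.mul_sum, hstar]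
  rw [hsum] at hlow hdual
  have hκ : κ = 1 := by
    have : μ * (κ * (m * n)) = μ * (1 * (m * n)) := by linarith
    have hmn : (0 : ℝ) < m * n := by positivity
    exact mul_right_cancel₀ hmn.ne' (mul_left_cancel₀ hμpos.ne' this)
  exact hne (by rw [hκ, one_smul])
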